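/- Let b ∈ (0,1), μ₀ ∈ ℝ, and let σ : (−π/2, π/2) → ℝ be continuously differentiable. Define μ : (−π/2, π/2) → ℝ by μ(θ) = μ₀ cos θ − (1/b) cos θ · ∫₀^θ σ'(s)/cos²(s) ds. Then the pair (σ, μ), regarded as functions of (θ,x) independent of x, satisfies the λ-equations: σ'(θ) + b cos θ · μ'(θ) + b sin θ · μ(θ) = 0 for all θ ∈ (−π/2, π/2), and both x-derivative equations hold trivially. -/

import Mathlib

/-!
Writing `F θ = ∫₀^θ σ'(s)/cos² s ds`, the definition reads `μ / cos = μ₀ - F / b`, and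
`b cos θ μ' + b sin θ μ = b cos² θ (μ / cos)' = - cos² θ F'(θ) = - σ'(θ)`, which is the
`θ`-equation. The fundamental theorem of calculus applies because `σ'` is continuous and
`cos` has no zero on `(-π/2, π/2)`. Functions of `θ` alone have vanishing `x`-derivative.
-/

noncomputable section

open Real Set

/-- Partial derivative in the `x` (second) direction. -/
def pdx (f : ℝ × ℝ → ℝ) (p : ℝ × ℝ) : ℝ := fderiv ℝ f p (0, 1)

lemma pdx_comp_fst {f : ℝ → ℝ} {p : ℝ × ℝ} (h : DifferentiableAt ℝ f p.1) :
    pdx (fun q => f q.1) p = 0 := by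
  have hfst : HasFDerivAt (fun q : ℝ × ℝ => f q.1)
      ((fderiv ℝ f p.1).comp (ContinuousLinearMap.fst ℝ ℝ ℝ)) p :=
    h.hasFDerivAt.comp p hasFDerivAt_fst
  simp [pdx, hfst.fderiv]

theorem hasDerivAt_integral_of_continuousOn {E : Type*} [NormedAddCommGroup E]
    [NormedSpace ℝ E] [CompleteSpace E] {s : Set ℝ} {g : ℝ → E} {a θ : ℝ}
    (hs : IsOpen s) (hs' : s.OrdConnected) (hg : ContinuousOn g s) (ha : a ∈ s)
    (hθ : θ ∈ s) : HasDerivAt (fun t => ∫ x in a..t, g x) (g θ) θ :=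
  intervalIntegral.integral_hasDerivAt_right
    ((hg.mono (hs'.uIcc_subset ha hθ)).intervalIntegrable)
    (hg.stronglyMeasurableAtFilter hs θ hθ) (hg.continuousAt (hs.mem_nhds hθ))

section LambdaEquation

variable {b μ₀ θ : ℝ} {F : ℝ → ℝ}

lemma hasDerivAt_mul_cos_sub_mul_cos_mul {F' : ℝ} (hF : HasDerivAt F F' θ) :
    HasDerivAt (fun θ => μ₀ * cos θ - 1 / b * cos θ * F θ)
      (μ₀ * -sin θ - (1 / b * -sin θ * F θ + 1 / b * cos θ * F')) θ :=
  ((hasDerivAt_cos θ).const_mul μ₀).sub (((hasDerivAt_cos θ).const_mul (1 / b)).mul hF)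

lemma lambda_equation_of_hasDerivAt {σ' : ℝ} (hb : b ≠ 0) (hcos : cos θ ≠ 0)
    (hF : HasDerivAt F (σ' / cos θ ^ 2) θ) :
    σ' + b * cos θ * deriv (fun θ => μ₀ * cos θ - 1 / b * cos θ * F θ) θ
      + b * sin θ * (μ₀ * cos θ - 1 / b * cos θ * F θ) = 0 := by
  rw [(hasDerivAt_mul_cos_sub_mul_cos_mul hF).deriv]
  field_simp
  ring

end LambdaEquation

theorem statement4 (b μ₀ : ℝ) (hb : b ∈ Ioo (0 : ℝ) 1)
    (σ : ℝ → ℝ) (hσ : ContDiffOn ℝ 1 σ (Ioo (-(π / 2)) (π / 2)))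
    (μ : ℝ → ℝ)
    (hμ : ∀ θ, μ θ = μ₀ * Real.cos θ -
      (1 / b) * Real.cos θ * ∫ s in (0 : ℝ)..θ, deriv σ s / Real.cos s ^ 2) :
    (∀ θ ∈ Ioo (-(π / 2)) (π / 2),
      deriv σ θ + b * Real.cos θ * deriv μ θ + b * Real.sin θ * μ θ = 0) ∧
    -- both `x`-derivative equations hold trivially, `σ` and `μ` being
    -- regarded as functions on `(−π/2, π/2) × ℝ` independent of `x`
    (∀ p : ℝ × ℝ, p.1 ∈ Ioo (-(π / 2)) (π / 2) →
      pdx (fun q => σ q.1) p + b * Real.cos p.1 * pdx (fun q => μ q.1) p = 0) := by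
  obtain rfl : μ = _ := funext hμ
  have hcos : ∀ θ ∈ Ioo (-(π / 2)) (π / 2), cos θ ≠ 0 := fun θ hθ =>
    (cos_pos_of_mem_Ioo hθ).ne'
  have hF : ∀ θ ∈ Ioo (-(π / 2)) (π / 2), HasDerivAt
      (fun t => ∫ s in (0 : ℝ)..t, deriv σ s / cos s ^ 2) (deriv σ θ / cos θ ^ 2) θ :=
    fun θ hθ => hasDerivAt_integral_of_continuousOn isOpen_Ioo ordConnected_Ioo
      ((hσ.continuousOn_deriv_of_isOpen isOpen_Ioo le_rfl).div (by fun_prop)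
        fun s hs => pow_ne_zero 2 (hcos s hs))
      ⟨by linarith [pi_div_two_pos], pi_div_two_pos⟩ hθ
  refine ⟨fun θ hθ => lambda_equation_of_hasDerivAt hb.1.ne' (hcos θ hθ) (hF θ hθ),
    fun p hp => ?_⟩
  have hσd : DifferentiableAt ℝ σ p.1 :=
    (hσ.differentiableOn one_ne_zero).differentiableAt (isOpen_Ioo.mem_nhds hp)
  rw [pdx_comp_fst hσd,
    pdx_comp_fst (hasDerivAt_mul_cos_sub_mul_cos_mul (hF p.1 hp)).differentiableAt]
  ring
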